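/- For a simple random walk on a finite connected graph G with m edges, the maximum hitting time H(G) satisfies H(G) ≤ m^2, with equality if and only if G is the path graph P_m. -/

import Mathlib

/-- `IsHittingTime G a H` : `H` satisfies the linear system characterizing the expected
hitting times of the absorbing vertex `a` for the simple random walk on `G`. -/
def IsHittingTime {V : Type*} [Fintype V] (G : SimpleGraph V) [DecidableRel G.Adj]
    (a : V) (H : V → ℝ) : Prop :=
  H a = 0 ∧ ∀ x, x ≠ a →
    (G.degree x : ℝ) * H x = (G.degree x : ℝ) + ∑ y ∈ G.neighborFinset x, H y

/-!
List the vertices as `x₀, x₁, …, x_N` by increasing hitting time `H`; then `x₀ = a`, because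
every other vertex has a neighbour with smaller hitting time. For `1 ≤ k ≤ N` let
`B = {x_k, …, x_N}`. Summing the hitting-time equations over `B` gives
`∑ (H u - H v) = ∑_{u ∈ B} deg u = 2 e(B) + |∂B|`, the sum running over the edges `uv` with
`u ∈ B`, `v ∉ B`. Each term is at least the increment `H x_k - H x_{k-1}`, so this increment is
at most `2 e(B) + 1`. As `G` is connected, at least `k` edges meet the `k` vertices outside `B`,
so `e(B) ≤ m - k`, and summing the increments gives `H x_j ≤ m² - (m - j)² ≤ m²`.

If `H x = m²`, then `N = m` and every inequality is tight. The increments are then positive, so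
`H` is injective, and every edge leaving `B` realises the increment, hence is `x_k x_{k-1}`:
`G` is the path `x₀ x₁ ⋯ x_m`. Conversely `j ↦ m² - (m - j)²` solves the hitting-time equations
of the path with target `0`.
-/

open Finset SimpleGraph

namespace SimpleGraph

variable {V : Type*} (G : SimpleGraph V) [DecidableRel G.Adj]

lemma sum_interedges_self_sub (s : Finset V) (f : V → ℝ) :
    ∑ p ∈ G.interedges s s, (f p.1 - f p.2) = 0 := by
  rw [sum_sub_distrib, sub_eq_zero]
  exact sum_equiv (Equiv.prodComm V V) (fun p ↦ by simp [swap_mem_interedges_iff]) fun _ _ ↦ rfl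

variable [Fintype V]

lemma sum_interedges_univ {M : Type*} [AddCommMonoid M] (s : Finset V) (φ : V → V → M) :
    ∑ p ∈ G.interedges s univ, φ p.1 p.2 = ∑ u ∈ s, ∑ v ∈ G.neighborFinset u, φ u v := by
  simp_rw [neighborFinset_eq_filter, interedges_def, sum_filter, sum_product]

lemma card_interedges_univ (s : Finset V) : #(G.interedges s univ) = ∑ u ∈ s, G.degree u := by
  rw [card_eq_sum_ones, G.sum_interedges_univ s fun _ _ ↦ 1]
  simp

lemma card_interedges_univ_univ : #(G.interedges univ univ) = 2 * #G.edgeFinset := by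
  rw [card_interedges_univ, sum_degrees_eq_twice_card_edges]

variable [DecidableEq V]

lemma sum_interedges_univ_eq_add {M : Type*} [AddCommMonoid M] (s : Finset V) (φ : V × V → M) :
    ∑ p ∈ G.interedges s univ, φ p =
      ∑ p ∈ G.interedges s s, φ p + ∑ p ∈ G.interedges s sᶜ, φ p := by
  rw [← sum_filter_add_sum_filter_not _ (fun p ↦ p.2 ∈ s)]
  congr 2 <;> ext p <;> simp [mem_interedges_iff, and_right_comm, and_assoc]

variable {G}

lemma Connected.interedges_compl_nonempty (hconn : G.Connected) {s : Finset V} {u v : V}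
    (hu : u ∈ s) (hv : v ∉ s) : (G.interedges s sᶜ).Nonempty := by
  obtain ⟨d, -, hd₁, hd₂⟩ := (hconn.preconnected u v).some.exists_boundary_dart s hu hv
  exact ⟨(d.fst, d.snd), (mem_interedges_iff G).2 ⟨hd₁, mem_compl.2 hd₂, d.adj⟩⟩

lemma Connected.card_interedges_add_two_mul_card_compl_le (hconn : G.Connected) {s : Finset V}
    (hs : s.Nonempty) : #(G.interedges s s) + 2 * #sᶜ ≤ 2 * #G.edgeFinset := by
  obtain ⟨k, hk⟩ : ∃ k, #sᶜ = k := ⟨_, rfl⟩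
  induction k generalizing s with
  | zero =>
    obtain rfl : s = univ := by simpa using hk
    simp [card_interedges_univ_univ]
  | succ k ih =>
    obtain ⟨u, hu⟩ := hs
    obtain ⟨v, hv⟩ := card_pos.1 (by omega : 0 < #sᶜ)
    obtain ⟨p, hp⟩ := hconn.interedges_compl_nonempty hu (mem_compl.1 hv)
    obtain ⟨hp₁, hp₂, hadj⟩ := (mem_interedges_iff G).1 hp
    rw [mem_compl] at hp₂
    have hgrow : #(G.interedges s s) + 2 ≤ #(G.interedges (insert p.2 s) (insert p.2 s)) := by
      have hsub : ((G.interedges s s).cons p.swap (by simp [mem_interedges_iff, hp₂])).cons p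
          (by simp [mem_interedges_iff, hp₂, Prod.ext_iff, hadj.ne]) ⊆
          G.interedges (insert p.2 s) (insert p.2 s) := by
        intro q
        simp only [mem_cons, mem_interedges_iff, mem_insert]
        rintro (rfl | rfl | ⟨hq₁, hq₂, hq⟩)
        · exact ⟨.inr hp₁, .inl rfl, hadj⟩
        · exact ⟨.inl rfl, .inr hp₁, hadj.symm⟩
        · exact ⟨.inr hq₁, .inr hq₂, hq⟩
      simpa only [card_cons] using card_le_card hsub
    have hcompl : #(insert p.2 s)ᶜ = k := by
      rw [card_compl, card_insert_of_notMem hp₂, ← Nat.sub_sub, ← card_compl, hk]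
      rfl
    have := ih (insert_nonempty _ _) hcompl
    omega

end SimpleGraph

lemma exists_equiv_fin_monotone {V α : Type*} [Fintype V] [Nonempty V] [LinearOrder α]
    (f : V → α) : ∃ (N : ℕ) (e : Fin (N + 1) ≃ V), Monotone (f ∘ e) := by
  obtain ⟨N, hN⟩ := Nat.exists_eq_succ_of_ne_zero (Fintype.card_ne_zero (α := V))
  let w := (Fintype.equivFinOfCardEq hN).symm
  exact ⟨N, (Tuple.sort (f ∘ w)).trans w, by exact Tuple.monotone_sort (f ∘ w)⟩

namespace IsHittingTime

variable {V : Type*} [Fintype V] {G : SimpleGraph V} [DecidableRel G.Adj] {a : V} {f : V → ℝ}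

lemma sum_sub_eq_degree (hf : IsHittingTime G a f) {x : V} (hx : x ≠ a) :
    ∑ y ∈ G.neighborFinset x, (f x - f y) = G.degree x := by
  rw [sum_sub_distrib, sum_const, card_neighborFinset_eq_degree, nsmul_eq_mul]
  linarith [hf.2 x hx]

lemma exists_adj_lt (hf : IsHittingTime G a f) (hconn : G.Connected) {x : V} (hx : x ≠ a) :
    ∃ y, G.Adj x y ∧ f y < f x := by
  by_contra! h
  have hsum : ∑ y ∈ G.neighborFinset x, (f x - f y) ≤ 0 :=
    sum_nonpos fun y hy ↦ sub_nonpos.2 (h y ((G.mem_neighborFinset x y).1 hy))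
  have hdeg : (0 : ℝ) < G.degree x := mod_cast (hconn.preconnected x a).degree_pos_left hx
  linarith [hf.sum_sub_eq_degree hx]

lemma eq_of_forall_le (hf : IsHittingTime G a f) (hconn : G.Connected) {u : V}
    (hu : ∀ v, f u ≤ f v) : u = a := by
  by_contra hua
  obtain ⟨y, -, hy⟩ := hf.exists_adj_lt hconn hua
  exact (hu y).not_gt hy

lemma apply_zero {N : ℕ} {e : Fin (N + 1) ≃ V} (hf : IsHittingTime G a f)
    (hconn : G.Connected) (he : Monotone (f ∘ e)) : e 0 = a :=
  hf.eq_of_forall_le hconn fun v ↦ by simpa using he (Fin.zero_le (e.symm v))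

lemma comp_iso {W : Type*} [Fintype W] {G' : SimpleGraph W} [DecidableRel G'.Adj] {H : W → ℝ}
    (φ : G ≃g G') (h : IsHittingTime G' (φ a) H) : IsHittingTime G a (H ∘ φ) := by
  have hN (x y : V) : y ∈ G.neighborFinset x ↔ φ y ∈ G'.neighborFinset (φ x) := by
    simp only [mem_neighborFinset, φ.map_adj_iff]
  have hdeg (x : V) : G.degree x = G'.degree (φ x) := by
    simpa only [card_neighborFinset_eq_degree] using card_equiv φ.toEquiv (hN x)
  refine ⟨h.1, fun x hx ↦ ?_⟩
  rw [hdeg, Function.comp_apply, h.2 (φ x) (φ.injective.ne hx)]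
  exact congrArg _ (sum_equiv φ.toEquiv (hN x) fun _ _ ↦ rfl).symm

variable [DecidableEq V] {s : Finset V}

lemma sum_interedges_compl (hf : IsHittingTime G a f) (ha : a ∉ s) :
    ∑ p ∈ G.interedges s sᶜ, (f p.1 - f p.2) = #(G.interedges s s) + #(G.interedges s sᶜ) := by
  have hdiv := G.sum_interedges_univ s fun u v ↦ f u - f v
  rw [G.sum_interedges_univ_eq_add s fun p ↦ f p.1 - f p.2, G.sum_interedges_self_sub, zero_add,
    sum_congr rfl fun u hu ↦ hf.sum_sub_eq_degree (ne_of_mem_of_not_mem hu ha)] at hdiv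
  have hcard : (#(G.interedges s univ) : ℝ) = #(G.interedges s s) + #(G.interedges s sᶜ) := by
    simpa using G.sum_interedges_univ_eq_add s fun _ ↦ (1 : ℝ)
  rw [hdiv, ← hcard, card_interedges_univ, Nat.cast_sum]

lemma le_card_interedges_add_one (hf : IsHittingTime G a f) (hconn : G.Connected) (ha : a ∉ s)
    (hs : s.Nonempty) {g : ℝ} (hg : ∀ p ∈ G.interedges s sᶜ, g ≤ f p.1 - f p.2) :
    g ≤ #(G.interedges s s) + 1 := by
  obtain ⟨u, hu⟩ := hs
  have hc : (1 : ℝ) ≤ #(G.interedges s sᶜ) :=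
    mod_cast (hconn.interedges_compl_nonempty hu ha).card_pos
  have hsum := card_nsmul_le_sum _ _ _ hg
  rw [nsmul_eq_mul, hf.sum_interedges_compl ha] at hsum
  nlinarith [mul_nonneg (sub_nonneg.2 hc) (Nat.cast_nonneg (α := ℝ) #(G.interedges s s))]

lemma sub_eq_of_eq_card_interedges_add_one (hf : IsHittingTime G a f) (ha : a ∉ s) {g : ℝ}
    (hg : ∀ p ∈ G.interedges s sᶜ, g ≤ f p.1 - f p.2) (hgI : g = #(G.interedges s s) + 1)
    {p : V × V} (hp : p ∈ G.interedges s sᶜ) : f p.1 - f p.2 = g := by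
  refine le_antisymm ?_ (hg p hp)
  have hrest := card_nsmul_le_sum ((G.interedges s sᶜ).erase p) (fun q ↦ f q.1 - f q.2) g
    fun q hq ↦ hg q (mem_of_mem_erase hq)
  rw [nsmul_eq_mul, card_erase_of_mem hp, Nat.cast_sub (card_pos.2 ⟨p, hp⟩), Nat.cast_one]
    at hrest
  have htot := add_sum_erase _ (fun q ↦ f q.1 - f q.2) hp
  rw [hf.sum_interedges_compl ha] at htot
  have hc : (1 : ℝ) ≤ #(G.interedges s sᶜ) := mod_cast card_pos.2 ⟨p, hp⟩
  nlinarith [mul_nonneg (sub_nonneg.2 hc) (Nat.cast_nonneg (α := ℝ) #(G.interedges s s))]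

end IsHittingTime

def pathHittingTime (m k : ℕ) : ℝ := (m : ℝ) ^ 2 - ((m : ℝ) - k) ^ 2

@[simp]
lemma pathHittingTime_zero (m : ℕ) : pathHittingTime m 0 = 0 := by
  simp [pathHittingTime]

lemma pathHittingTime_succ_sub (m k : ℕ) :
    pathHittingTime m (k + 1) - pathHittingTime m k = 2 * ((m : ℝ) - (k + 1)) + 1 := by
  simp only [pathHittingTime]
  push_cast
  ring

lemma isHittingTime_pathGraph (m : ℕ) [DecidableRel (pathGraph (m + 1)).Adj] :
    IsHittingTime (pathGraph (m + 1)) 0 fun k ↦ pathHittingTime m k := by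
  refine ⟨by simp, fun k hk ↦ ?_⟩
  obtain ⟨j, hj⟩ : ∃ j, k.val = j + 1 := Nat.exists_eq_succ_of_ne_zero (Fin.val_ne_iff.2 hk)
  have hpred : pathHittingTime m k - pathHittingTime m j = 2 * ((m : ℝ) - k) + 1 := by
    rw [hj, pathHittingTime_succ_sub]
    push_cast
    ring
  rcases (Nat.lt_succ_iff.1 k.isLt).lt_or_eq with hkm | hkm
  · have hN : (pathGraph (m + 1)).neighborFinset k = {⟨j, by omega⟩, ⟨k + 1, by omega⟩} := by
      ext y
      simp [pathGraph_adj, Fin.ext_iff]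
      omega
    have hne : (⟨j, by omega⟩ : Fin (m + 1)) ≠ ⟨k + 1, by omega⟩ := by
      simp [Fin.ext_iff]
      omega
    have hsucc := pathHittingTime_succ_sub m k
    rw [← card_neighborFinset_eq_degree, hN, card_pair hne, sum_pair hne]
    push_cast
    linarith
  · have hN : (pathGraph (m + 1)).neighborFinset k = {⟨j, by omega⟩} := by
      ext y
      simp [pathGraph_adj, Fin.ext_iff]
      omega
    have hkm' : (k.val : ℝ) = m := mod_cast hkm
    rw [← card_neighborFinset_eq_degree, hN, card_singleton, sum_singleton]
    push_cast
    linarith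

section Enumeration

variable {V : Type*} [Fintype V] [DecidableEq V] {G : SimpleGraph V} [DecidableRel G.Adj]
  {N : ℕ} {e : Fin (N + 1) ≃ V}

lemma mem_interedges_map_Ioi {j : Fin (N + 1)} {p : V × V} :
    p ∈ G.interedges ((Ioi j).map e.toEmbedding) ((Ioi j).map e.toEmbedding)ᶜ ↔
      j < e.symm p.1 ∧ e.symm p.2 ≤ j ∧ G.Adj p.1 p.2 := by
  simp [mem_interedges_iff, mem_map_equiv]

lemma card_compl_map_Ioi (j : Fin (N + 1)) : #((Ioi j).map e.toEmbedding)ᶜ = j + 1 := by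
  rw [card_compl, card_map, Fin.card_Ioi, Fintype.card_congr e.symm, Fintype.card_fin]
  omega

lemma SimpleGraph.Connected.card_interedges_map_Ioi_add_one_le (hconn : G.Connected)
    (i : Fin N) :
    (#(G.interedges ((Ioi i.castSucc).map e.toEmbedding) ((Ioi i.castSucc).map e.toEmbedding))
      : ℝ) + 1 ≤ pathHittingTime #G.edgeFinset (i + 1) - pathHittingTime #G.edgeFinset i := by
  have hcount := hconn.card_interedges_add_two_mul_card_compl_le
    (s := (Ioi i.castSucc).map e.toEmbedding) ⟨e i.succ, by simp⟩
  rw [card_compl_map_Ioi, Fin.val_castSucc] at hcount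
  have hcount' := (Nat.cast_le (α := ℝ)).2 hcount
  push_cast at hcount'
  rw [pathHittingTime_succ_sub]
  linarith

lemma nonempty_iso_pathGraph_of_interedges_map_Ioi
    (h : ∀ i : Fin N, G.interedges ((Ioi i.castSucc).map e.toEmbedding)
      ((Ioi i.castSucc).map e.toEmbedding)ᶜ = {(e i.succ, e i.castSucc)}) :
    Nonempty (G ≃g pathGraph (N + 1)) := by
  have hlt {j k : Fin (N + 1)} (hkj : k < j) : G.Adj (e j) (e k) ↔ j.val = k.val + 1 := by
    have key := congrArg ((e j, e k) ∈ ·) (h (k.castPred (Fin.ne_last_of_lt hkj)))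
    simp only [mem_interedges_map_Ioi, Fin.castSucc_castPred, Equiv.symm_apply_apply,
      mem_singleton, Prod.mk.injEq, e.apply_eq_iff_eq, eq_iff_iff] at key
    rw [Fin.ext_iff, Fin.val_succ, Fin.coe_castPred] at key
    simpa [hkj] using key
  refine ⟨⟨e.symm, fun {u v} ↦ ?_⟩⟩
  obtain ⟨j, rfl⟩ := e.surjective u
  obtain ⟨k, rfl⟩ := e.surjective v
  simp only [Equiv.symm_apply_apply, pathGraph_adj]
  rcases lt_trichotomy j k with hjk | rfl | hjk
  · rw [G.adj_comm, hlt hjk]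
    omega
  · simp
  · rw [hlt hjk]
    omega

namespace IsHittingTime

variable {a : V} {f : V → ℝ}

lemma apply_succ_le_and_le_apply_castSucc (he : Monotone (f ∘ e)) {i : Fin N} {p : V × V}
    (hp : p ∈ G.interedges ((Ioi i.castSucc).map e.toEmbedding)
      ((Ioi i.castSucc).map e.toEmbedding)ᶜ) :
    f (e i.succ) ≤ f p.1 ∧ f p.2 ≤ f (e i.castSucc) := by
  obtain ⟨h₁, h₂, -⟩ := mem_interedges_map_Ioi.1 hp
  exact ⟨by simpa using he (Fin.castSucc_lt_iff_succ_le.1 h₁), by simpa using he h₂⟩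

lemma sub_le_card_interedges_add_one (hf : IsHittingTime G a f) (hconn : G.Connected)
    (he : Monotone (f ∘ e)) (i : Fin N) :
    f (e i.succ) - f (e i.castSucc) ≤ #(G.interedges ((Ioi i.castSucc).map e.toEmbedding)
      ((Ioi i.castSucc).map e.toEmbedding)) + 1 := by
  refine hf.le_card_interedges_add_one hconn ?_ ⟨e i.succ, by simp⟩ fun p hp ↦ ?_
  · simp [← hf.apply_zero hconn he]
  · have := apply_succ_le_and_le_apply_castSucc he hp
    linarith

lemma antitone_sub_pathHittingTime (hf : IsHittingTime G a f) (hconn : G.Connected)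
    (he : Monotone (f ∘ e)) : Antitone fun j ↦ f (e j) - pathHittingTime #G.edgeFinset j := by
  refine Fin.antitone_iff_succ_le.2 fun i ↦ ?_
  have := (hf.sub_le_card_interedges_add_one hconn he i).trans
    (hconn.card_interedges_map_Ioi_add_one_le i)
  simp only [Fin.val_succ, Fin.val_castSucc]
  linarith

lemma apply_le_pathHittingTime (hf : IsHittingTime G a f) (hconn : G.Connected)
    (he : Monotone (f ∘ e)) (j : Fin (N + 1)) : f (e j) ≤ pathHittingTime #G.edgeFinset j := by
  have := hf.antitone_sub_pathHittingTime hconn he (Fin.zero_le j)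
  simp only [hf.apply_zero hconn he, hf.1, Fin.val_zero, pathHittingTime_zero] at this
  linarith

lemma interedges_map_Ioi_eq_singleton (hf : IsHittingTime G a f) (hconn : G.Connected)
    (he : Monotone (f ∘ e)) (hlast : f (e (Fin.last N)) = pathHittingTime #G.edgeFinset N)
    (i : Fin N) : G.interedges ((Ioi i.castSucc).map e.toEmbedding)
      ((Ioi i.castSucc).map e.toEmbedding)ᶜ = {(e i.succ, e i.castSucc)} := by
  have hψ (j : Fin (N + 1)) : f (e j) = pathHittingTime #G.edgeFinset j := by
    have := hf.antitone_sub_pathHittingTime hconn he (Fin.le_last j)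
    simp only [hlast, Fin.val_last, sub_self] at this
    linarith [hf.apply_le_pathHittingTime hconn he j]
  have hgap (i : Fin N) : f (e i.succ) - f (e i.castSucc) =
      #(G.interedges ((Ioi i.castSucc).map e.toEmbedding)
        ((Ioi i.castSucc).map e.toEmbedding)) + 1 :=
    le_antisymm (hf.sub_le_card_interedges_add_one hconn he i)
      (by rw [hψ, hψ]; exact hconn.card_interedges_map_Ioi_add_one_le i)
  have hinj : Function.Injective (f ∘ e) :=
    (Fin.strictMono_iff_lt_succ.2 fun i ↦ sub_pos.1 (by simp only [Function.comp_apply, hgap i]; positivity)).injective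
  have ha : a ∉ (Ioi i.castSucc).map e.toEmbedding := by simp [← hf.apply_zero hconn he]
  have hne := hconn.interedges_compl_nonempty (u := e i.succ) (by simp) ha
  refine hne.subset_singleton_iff.1 fun p hp ↦ ?_
  obtain ⟨h₁, h₂⟩ := apply_succ_le_and_le_apply_castSucc he hp
  have hterm := hf.sub_eq_of_eq_card_interedges_add_one ha (fun q hq ↦ by
    linarith [apply_succ_le_and_le_apply_castSucc he hq]) (hgap i) hp
  have hp₁ : e.symm p.1 = i.succ :=
    hinj (by simp only [Function.comp_apply, e.apply_symm_apply]; linarith)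
  have hp₂ : e.symm p.2 = i.castSucc :=
    hinj (by simp only [Function.comp_apply, e.apply_symm_apply]; linarith)
  rw [mem_singleton, ← hp₁, ← hp₂]
  simp

end IsHittingTime

end Enumeration

namespace IsHittingTime

variable {V : Type*} [Fintype V] {G : SimpleGraph V} [DecidableRel G.Adj] {a : V} {f : V → ℝ}

lemma le_sq_card_edgeFinset (hf : IsHittingTime G a f) (hconn : G.Connected) (x : V) :
    f x ≤ (#G.edgeFinset : ℝ) ^ 2 := by
  classical
  have : Nonempty V := ⟨x⟩
  obtain ⟨N, e, he⟩ := exists_equiv_fin_monotone f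
  calc f x = f (e (e.symm x)) := by rw [e.apply_symm_apply]
    _ ≤ pathHittingTime #G.edgeFinset (e.symm x) := hf.apply_le_pathHittingTime hconn he _
    _ ≤ (#G.edgeFinset : ℝ) ^ 2 := sub_le_self _ (sq_nonneg _)

lemma nonempty_iso_pathGraph (hf : IsHittingTime G a f) (hconn : G.Connected) {x : V}
    (hx : f x = (#G.edgeFinset : ℝ) ^ 2) : Nonempty (G ≃g pathGraph (#G.edgeFinset + 1)) := by
  classical
  have : Nonempty V := ⟨x⟩
  obtain ⟨N, e, he⟩ := exists_equiv_fin_monotone f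
  have hxm : (e.symm x : ℕ) = #G.edgeFinset := by
    have hle := hf.apply_le_pathHittingTime hconn he (e.symm x)
    rw [e.apply_symm_apply, hx, pathHittingTime] at hle
    have hsq : ((#G.edgeFinset : ℝ) - (e.symm x : ℕ)) ^ 2 = 0 :=
      le_antisymm (by linarith) (sq_nonneg _)
    exact_mod_cast (sub_eq_zero.1 (pow_eq_zero_iff two_ne_zero |>.1 hsq)).symm
  have hcard := hconn.card_vert_le_card_edgeSet_add_one
  rw [Nat.card_congr e.symm, Nat.card_eq_fintype_card, Fintype.card_fin, Nat.card_eq_fintype_card,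
    ← edgeFinset_card] at hcard
  obtain rfl : N = #G.edgeFinset := by
    have := (e.symm x).isLt
    omega
  have hlast : e.symm x = Fin.last _ := Fin.ext hxm
  refine nonempty_iso_pathGraph_of_interedges_map_Ioi
    (hf.interedges_map_Ioi_eq_singleton hconn he ?_)
  rw [← hlast, e.apply_symm_apply, hx]
  simp [pathHittingTime]

end IsHittingTime

theorem max_hitting_time_le_sq_iff_path {V : Type*} [Fintype V]
    (G : SimpleGraph V) [DecidableRel G.Adj] (hconn : G.Connected)
    (m : ℕ) (hm : m = G.edgeFinset.card) :
    (∀ (a : V) (H : V → ℝ), IsHittingTime G a H → ∀ x, H x ≤ (m : ℝ) ^ 2) ∧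
    ((∃ (a : V) (H : V → ℝ) (x : V), IsHittingTime G a H ∧ H x = (m : ℝ) ^ 2) ↔
      Nonempty (G ≃g SimpleGraph.pathGraph (m + 1))) := by
  subst hm
  refine ⟨fun a H hf x ↦ hf.le_sq_card_edgeFinset hconn x,
    fun ⟨a, H, x, hf, hx⟩ ↦ hf.nonempty_iso_pathGraph hconn hx, fun ⟨φ⟩ ↦ ?_⟩
  classical
  have hpath : IsHittingTime (pathGraph _) (φ (φ.symm 0))
      fun k ↦ pathHittingTime #G.edgeFinset k := by
    rw [φ.apply_symm_apply]
    exact isHittingTime_pathGraph #G.edgeFinset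
  exact ⟨_, _, φ.symm (Fin.last _), hpath.comp_iso φ, by simp [pathHittingTime]⟩
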